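/- As λ → ∞, S_λ^2 := ∑_{j=1}^∞ 1/(2^j − 1 + λ)^2 = (log λ)/(λ^2·log 2) + O(λ^{−2}). -/
import Mathlib


/-- As `λ → ∞`, `S_λ² := ∑_{j=1}^∞ (2^j - 1 + λ)^{-2} = (log λ)/(λ² log 2) + O(λ^{-2})`. -/
theorem S_sq_asymptotics :
    ∃ C lam0 : ℝ, ∀ lam : ℝ, lam0 ≤ lam →
      |(∑' j : ℕ, (((2 : ℝ) ^ (j + 1) - 1 + lam) ^ 2)⁻¹) -
          Real.log lam / (lam ^ 2 * Real.log 2)| ≤ C / lam ^ 2 := by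
  refine ⟨13, 2, fun lam hlam => ?_⟩
  have hl0 : (0:ℝ) < lam := by linarith
  set g : ℕ → ℝ := fun j => (((2 : ℝ) ^ (j + 1) - 1 + lam) ^ 2)⁻¹ with hg
  have hdpos : ∀ j : ℕ, (2:ℝ)^j ≤ (2:ℝ) ^ (j + 1) - 1 + lam := by
    intro j
    have h1 : (1:ℝ) ≤ 2 ^ j := one_le_pow₀ (by norm_num)
    have h2 : (2:ℝ)^(j+1) = 2 * 2^j := by ring
    nlinarith
  have hpow4 : ∀ n : ℕ, ((2:ℝ)^n)^2 = 4^n := by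
    intro n; rw [← pow_mul, mul_comm, pow_mul]; norm_num
  have hgle : ∀ j : ℕ, g j ≤ (1/4:ℝ)^j := by
    intro j
    have h1 : (0:ℝ) < 2^j := by positivity
    have h2 := hdpos j
    have h3 : ((2:ℝ)^j)^2 ≤ ((2:ℝ)^(j+1) - 1 + lam)^2 := by nlinarith
    calc g j ≤ (((2:ℝ)^j)^2)⁻¹ := inv_anti₀ (by positivity) h3
      _ = (1/4:ℝ)^j := by rw [hpow4]; simp [one_div, inv_pow]
  have hgpos : ∀ j : ℕ, 0 < g j := by
    intro j
    have := hdpos j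
    have h1 : (0:ℝ) < 2^j := by positivity
    have : (0:ℝ) < (2:ℝ)^(j+1) - 1 + lam := by linarith
    positivity
  have hsum : Summable g :=
    Summable.of_nonneg_of_le (fun j => (hgpos j).le) hgle
      (summable_geometric_of_lt_one (by norm_num) (by norm_num))
  set N := ⌊Real.logb 2 lam⌋₊ with hN
  have hNlb : (N:ℝ) ≤ Real.logb 2 lam :=
    Nat.floor_le (Real.logb_nonneg (by norm_num) (by linarith))
  have hNub : Real.logb 2 lam < N + 1 := Nat.lt_floor_add_one _
  have h2N : (2:ℝ)^N ≤ lam := by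
    calc (2:ℝ)^N = (2:ℝ)^(N:ℝ) := (Real.rpow_natCast 2 N).symm
      _ ≤ (2:ℝ)^(Real.logb 2 lam) := Real.rpow_le_rpow_of_exponent_le (by norm_num) hNlb
      _ = lam := Real.rpow_logb (by norm_num) (by norm_num) hl0
  have hN2 : lam < 2^(N+1) := by
    calc lam = (2:ℝ)^(Real.logb 2 lam) := (Real.rpow_logb (by norm_num) (by norm_num) hl0).symm
      _ < (2:ℝ)^((N:ℝ)+1) := Real.rpow_lt_rpow_of_exponent_lt (by norm_num) hNub
      _ = (2:ℝ)^(N+1) := by rw [← Real.rpow_natCast 2 (N+1)]; push_cast; ring_nf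
  -- head term bound
  have hterm : ∀ i ∈ Finset.range N, |g i - (lam^2)⁻¹| ≤ 3 * 2^(i+1) / lam^3 := by
    intro i hi
    have hiN : i + 1 ≤ N := Finset.mem_range.mp hi
    have hp : (2:ℝ)^(i+1) ≤ 2^N := pow_le_pow_right₀ (by norm_num) hiN
    have hpl : (2:ℝ)^(i+1) ≤ lam := hp.trans h2N
    have hp1 : (1:ℝ) ≤ 2^(i+1) := one_le_pow₀ (by norm_num)
    set d := (2:ℝ)^(i+1) - 1 + lam with hd
    have hld : lam ≤ d := by rw [hd]; linarith
    have hd2 : d ≤ 2*lam := by rw [hd]; linarith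
    have hdp : (0:ℝ) < d := lt_of_lt_of_le hl0 hld
    have hglei : g i ≤ (lam^2)⁻¹ := inv_anti₀ (by positivity) (by nlinarith)
    have hkey : (lam^2)⁻¹ - (d^2)⁻¹ ≤ 3 * 2^(i+1) / lam^3 := by
      rw [inv_sub_inv (by positivity) (by positivity),
        div_le_div_iff₀ (by positivity) (by positivity)]
      have e1 : d^2 - lam^2 ≤ 3*(2^(i+1))*lam := by nlinarith
      have e2' : lam^2 ≤ d^2 := by nlinarith
      have e2 : lam^4 ≤ lam^2 * d^2 := by nlinarith [mul_le_mul_of_nonneg_left e2' (sq_nonneg lam)]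
      nlinarith [pow_pos hl0 3, mul_le_mul_of_nonneg_right e1 (pow_pos hl0 3).le]
    have hgi : g i = (d^2)⁻¹ := rfl
    rw [abs_sub_comm, abs_of_nonneg (by rw [hgi] at hglei ⊢; linarith), hgi]
    linarith [hkey]
  have hhead : |(∑ i ∈ Finset.range N, g i) - N * (lam^2)⁻¹| ≤ 6 / lam^2 := by
    have h1 : (∑ i ∈ Finset.range N, g i) - N*(lam^2)⁻¹
        = ∑ i ∈ Finset.range N, (g i - (lam^2)⁻¹) := by
      rw [Finset.sum_sub_distrib, Finset.sum_const, Finset.card_range, nsmul_eq_mul]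
    rw [h1]
    calc |∑ i ∈ Finset.range N, (g i - (lam^2)⁻¹)|
        ≤ ∑ i ∈ Finset.range N, |g i - (lam^2)⁻¹| := Finset.abs_sum_le_sum_abs _ _
      _ ≤ ∑ i ∈ Finset.range N, 3 * 2^(i+1) / lam^3 := Finset.sum_le_sum hterm
      _ = 6/lam^3 * ∑ i ∈ Finset.range N, (2:ℝ)^i := by
          rw [Finset.mul_sum]; exact Finset.sum_congr rfl fun i _ => by ring
      _ = 6/lam^3 * (2^N - 1) := by rw [geom_sum_eq (by norm_num) N]; norm_num
      _ ≤ 6/lam^3 * lam := by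
          apply mul_le_mul_of_nonneg_left (by linarith) (by positivity)
      _ = 6/lam^2 := by field_simp
  -- tail
  have htail0 : 0 ≤ ∑' j, g (j + N) := tsum_nonneg fun j => (hgpos _).le
  have htail : (∑' j, g (j + N)) ≤ 6 / lam^2 := by
    have hb : ∀ j : ℕ, g (j + N) ≤ (1/4:ℝ)^j * (1/4)^N := fun j => by
      calc g (j+N) ≤ (1/4:ℝ)^(j+N) := hgle _
        _ = (1/4:ℝ)^j * (1/4)^N := pow_add _ _ _
    have hS : Summable (fun j : ℕ => (1/4:ℝ)^j * (1/4)^N) :=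
      (summable_geometric_of_lt_one (by norm_num) (by norm_num)).mul_right _
    have h1 : (∑' j, g (j + N)) ≤ ∑' j : ℕ, (1/4:ℝ)^j * (1/4)^N :=
      Summable.tsum_le_tsum hb ((summable_nat_add_iff N).mpr hsum) hS
    have h2 : (∑' j : ℕ, (1/4:ℝ)^j * (1/4)^N) = (4/3) * (1/4)^N := by
      rw [tsum_mul_right, tsum_geometric_of_lt_one (by norm_num) (by norm_num)]
      ring
    have h5 : lam ≤ 2 * 2^N := by
      have : (2:ℝ)^(N+1) = 2*2^N := by ring
      linarith
    have h3 : ((1:ℝ)/4)^N ≤ 4 / lam^2 := by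
      have h6 : ((1:ℝ)/4)^N = (((2:ℝ)^N)^2)⁻¹ := by rw [hpow4]; simp [one_div, inv_pow]
      rw [h6]
      calc (((2:ℝ)^N)^2)⁻¹ ≤ (lam^2/4)⁻¹ := inv_anti₀ (by positivity) (by nlinarith)
        _ = 4/lam^2 := by rw [inv_div]
    calc (∑' j, g (j + N)) ≤ (4/3) * (1/4:ℝ)^N := h2 ▸ h1
      _ ≤ (4/3) * (4/lam^2) := by linarith [h3]
      _ ≤ 6/lam^2 := by
          rw [show (4:ℝ)/3*(4/lam^2) = 16/3 * (lam^2)⁻¹ by ring,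
            show (6:ℝ)/lam^2 = 6*(lam^2)⁻¹ by ring]
          exact mul_le_mul_of_nonneg_right (by norm_num) (by positivity)
  -- N vs log
  have hlog2 : (0:ℝ) < Real.log 2 := Real.log_pos (by norm_num)
  have hNlog : |(N:ℝ) * (lam^2)⁻¹ - Real.log lam / (lam^2 * Real.log 2)| ≤ 1/lam^2 := by
    have h1 : Real.log lam / (lam^2 * Real.log 2) = (Real.logb 2 lam) * (lam^2)⁻¹ := by
      rw [← Real.log_div_log]
      field_simp
    rw [h1, ← sub_mul, abs_mul, abs_of_nonneg (by positivity : (0:ℝ) ≤ (lam^2)⁻¹)]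
    have h2 : |(N:ℝ) - Real.logb 2 lam| ≤ 1 := by
      rw [abs_le]; constructor <;> linarith
    calc |(N:ℝ) - Real.logb 2 lam| * (lam^2)⁻¹ ≤ 1 * (lam^2)⁻¹ :=
        mul_le_mul_of_nonneg_right h2 (by positivity)
      _ = 1/lam^2 := by rw [one_mul, one_div]
  have hsplit : (∑ i ∈ Finset.range N, g i) + (∑' j, g (j + N)) = ∑' j, g j :=
    Summable.sum_add_tsum_nat_add N hsum
  have e : (∑ i ∈ Finset.range N, g i) + (∑' j, g (j + N))
      - Real.log lam / (lam^2 * Real.log 2)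
      = ((∑ i ∈ Finset.range N, g i) - N*(lam^2)⁻¹) + (∑' j, g (j + N))
        + ((N:ℝ)*(lam^2)⁻¹ - Real.log lam / (lam^2 * Real.log 2)) := by ring
  have habs : |(∑' j, g j) - Real.log lam / (lam^2 * Real.log 2)| ≤ 13/lam^2 := by
    rw [← hsplit, e]
    have t1 := abs_add_le (((∑ i ∈ Finset.range N, g i) - N*(lam^2)⁻¹) + (∑' j, g (j + N)))
      ((N:ℝ)*(lam^2)⁻¹ - Real.log lam / (lam^2 * Real.log 2))
    have t2 := abs_add_le ((∑ i ∈ Finset.range N, g i) - N*(lam^2)⁻¹) (∑' j, g (j + N))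
    have t3 : |∑' j, g (j + N)| = ∑' j, g (j + N) := abs_of_nonneg htail0
    have : (13:ℝ)/lam^2 = 6/lam^2 + 6/lam^2 + 1/lam^2 := by ring
    linarith
  exact habs
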